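/- Let G be a connected finite simple graph on n vertices with diameter d. Then G has at least ⌊d/2⌋ signless Laplacian eigenvalues (counted with multiplicity) in the half-open interval (2, 2n−2]. -/

import Mathlib

open Matrix

/-- The signless Laplacian matrix of a finite simple graph: the diagonal degree matrix
plus the adjacency matrix. -/
noncomputable def sLap {V : Type*} [Fintype V] [DecidableEq V] (G : SimpleGraph V) :
    Matrix V V ℝ :=
  letI := Classical.decRel G.Adj
  Matrix.diagonal (fun v => (G.degree v : ℝ)) + G.adjMatrix ℝ

/-- The multiset of signless Laplacian eigenvalues of `G`, i.e. the roots (with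
multiplicity) of the characteristic polynomial of the signless Laplacian matrix. -/
noncomputable def qSpec {V : Type*} [Fintype V] [DecidableEq V] (G : SimpleGraph V) :
    Multiset ℝ :=
  (sLap G).charpoly.roots

/-- The number of signless Laplacian eigenvalues of `G` lying in `I`, counted with
multiplicity. -/
noncomputable def qCount {V : Type*} [Fintype V] [DecidableEq V] (G : SimpleGraph V)
    (I : Set ℝ) : ℕ :=
  letI := Classical.decPred fun x : ℝ => x ∈ I
  Multiset.countP (fun x => x ∈ I) (qSpec G)

/-- The `k`-th largest signless Laplacian eigenvalue of `G` (1-indexed), i.e. `q_k(G)`: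
the entry at position `card V - k` of the list of eigenvalues sorted in nondecreasing
order. -/
noncomputable def qEig {V : Type*} [Fintype V] [DecidableEq V] (G : SimpleGraph V)
    (k : ℕ) : ℝ :=
  ((qSpec G).sort (· ≤ ·)).getD (Fintype.card V - k) 0

/-- The matching number `ν(G)` of `G`: the number of edges of a maximum matching. -/
noncomputable def matchingNumber {V : Type*} [Fintype V] (G : SimpleGraph V) : ℕ :=
  sSup {k | ∃ M : G.Subgraph, M.IsMatching ∧ M.edgeSet.ncard = k}

/-- The independence number `α(G)` of `G`: the maximum size of a set of pairwise
nonadjacent vertices. -/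
noncomputable def indepNum {V : Type*} [Fintype V] (G : SimpleGraph V) : ℕ :=
  sSup {k | ∃ s : Finset V, (∀ u ∈ s, ∀ v ∈ s, ¬ G.Adj u v) ∧ s.card = k}

section Aux

open Polynomial

variable {n R : Type*} [Fintype n] [DecidableEq n] [CommRing R]

private lemma charpoly_conj_aux (P Q M : Matrix n n R) (h1 : P * Q = 1) :
    (P * M * Q).charpoly = M.charpoly := by
  have hcm : charmatrix (P * M * Q) = P.map C * charmatrix M * Q.map C := by
    rw [charmatrix, charmatrix, Matrix.mul_sub, Matrix.sub_mul]
    congr 1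
    · rw [scalar_apply, ← smul_one_eq_diagonal, mul_smul_comm, smul_mul_assoc, mul_one,
        ← Matrix.map_mul, h1, Matrix.map_one _ (map_zero C) (map_one C)]
    · simp only [RingHom.mapMatrix_apply]
      rw [Matrix.map_mul, Matrix.map_mul]
  have hdet : (P.map (C : R →+* R[X])).det * (Q.map C).det = 1 := by
    rw [← det_mul, ← Matrix.map_mul, h1]
    simp
  rw [Matrix.charpoly, hcm, det_mul, det_mul, Matrix.charpoly]
  calc (P.map (C : R →+* R[X])).det * (charmatrix M).det * (Q.map C).det
      = (charmatrix M).det * ((P.map (C : R →+* R[X])).det * (Q.map C).det) := by ring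
    _ = (charmatrix M).det := by rw [hdet, mul_one]

private lemma charpoly_diagonal_aux (d : n → R) :
    (diagonal d).charpoly = ∏ i, (X - C (d i)) := by
  have : charmatrix (diagonal d) = diagonal (fun i => X - C (d i)) := by
    ext i j
    by_cases h : i = j <;> simp [h, charmatrix_apply, diagonal_apply]
  rw [Matrix.charpoly, this, det_diagonal]

private lemma roots_charpoly_hermitian (A : Matrix n n ℝ) (hA : A.IsHermitian) :
    A.charpoly.roots = Multiset.map hA.eigenvalues Finset.univ.val := by
  have hsp := hA.spectral_theorem
  have hU1 : (hA.eigenvectorUnitary : Matrix n n ℝ) * (star hA.eigenvectorUnitary : Matrix n n ℝ) = 1 := by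
    exact_mod_cast (Matrix.mem_unitaryGroup_iff).mp (hA.eigenvectorUnitary).2
  have h3 : A.charpoly = (diagonal (RCLike.ofReal ∘ hA.eigenvalues) : Matrix n n ℝ).charpoly := by
    conv_lhs => rw [hsp]
    exact charpoly_conj_aux _ _ _ hU1
  rw [h3, charpoly_diagonal_aux]
  have h4 : (∏ i, (X - C ((RCLike.ofReal ∘ hA.eigenvalues) i)) : ℝ[X])
      = (Multiset.map (fun a : ℝ => X - C a) (Multiset.map hA.eigenvalues Finset.univ.val)).prod := by
    rw [Multiset.map_map]
    rfl
  rw [h4, roots_multiset_prod_X_sub_C]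

private lemma count_big_eigenvalues
    (A : Matrix n n ℝ) (hA : A.IsHermitian) {m : ℕ} (w : Fin m → (n → ℝ))
    (hw : ∀ c : Fin m → ℝ, c ≠ 0 →
      2 * ((∑ i, c i • w i) ⬝ᵥ (∑ i, c i • w i))
        < (∑ i, c i • w i) ⬝ᵥ (A *ᵥ (∑ i, c i • w i))) :
    m ≤ (Finset.univ.filter fun i => 2 < hA.eigenvalues i).card := by
  classical
  set S := (Finset.univ.filter fun i => 2 < hA.eigenvalues i) with hS
  by_contra hlt
  push_neg at hlt
  set U : Matrix n n ℝ := (hA.eigenvectorUnitary : Matrix n n ℝ) with hU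
  have hstar : star U = Uᵀ := by
    ext i j
    simp [Matrix.star_apply]
  have hUU : U * Uᵀ = 1 := by
    rw [← hstar]
    exact_mod_cast (Matrix.mem_unitaryGroup_iff).mp (hA.eigenvectorUnitary).2
  set W : Matrix n (Fin m) ℝ := Matrix.of (fun v i => w i v) with hW
  set L : (Fin m → ℝ) →ₗ[ℝ] ({i // i ∈ S} → ℝ) :=
    (LinearMap.funLeft ℝ ℝ Subtype.val).comp (Uᵀ * W).mulVecLin with hL
  have hnotinj : ¬ Function.Injective L := by
    intro hinj
    have := LinearMap.finrank_le_finrank_of_injective hinj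
    simp only [Module.finrank_pi, Fintype.card_fin, Fintype.card_coe] at this
    omega
  rw [← LinearMap.ker_eq_bot] at hnotinj
  obtain ⟨c, hcker, hc0⟩ := Submodule.ne_bot_iff _ |>.mp hnotinj
  set x : n → ℝ := ∑ i, c i • w i with hx
  have hWc : W *ᵥ c = x := by
    ext v
    simp [hW, hx, Matrix.mulVec, dotProduct, Finset.sum_apply, mul_comm]
  set y : n → ℝ := x ᵥ* U with hy
  have hyT : Uᵀ *ᵥ x = y := Matrix.mulVec_transpose U x
  have hyS : ∀ i ∈ S, y i = 0 := by
    intro i hi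
    have := congrFun hcker ⟨i, hi⟩
    simpa [hL, Matrix.mulVecLin_apply, ← Matrix.mulVec_mulVec, hWc, hyT] using this
  have h1 : x ⬝ᵥ x = y ⬝ᵥ y := by
    have e1 : y ⬝ᵥ (Uᵀ *ᵥ x) = (y ᵥ* Uᵀ) ⬝ᵥ x := Matrix.dotProduct_mulVec y Uᵀ x
    rw [hyT] at e1
    rw [e1, hy, Matrix.vecMul_vecMul, hUU, Matrix.vecMul_one]
  have h2 : x ⬝ᵥ (A *ᵥ x) = ∑ i, hA.eigenvalues i * (y i)^2 := by
    have e2 : x ⬝ᵥ (A *ᵥ x)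
        = y ⬝ᵥ ((Matrix.diagonal (RCLike.ofReal ∘ hA.eigenvalues) : Matrix n n ℝ) *ᵥ y) := by
      conv_lhs => rw [hA.spectral_theorem, Unitary.conjStarAlgAut_apply, hstar]
      rw [← Matrix.mulVec_mulVec, ← Matrix.mulVec_mulVec, Matrix.dotProduct_mulVec, ← hy, hyT]
    rw [e2]
    simp only [Matrix.mulVec_diagonal, dotProduct]
    apply Finset.sum_congr rfl
    intro i _
    simp only [Function.comp_apply, RCLike.ofReal_real_eq_id, id_eq]
    ring
  have h3 : ∑ i, hA.eigenvalues i * (y i)^2 ≤ ∑ i, 2 * (y i)^2 := by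
    apply Finset.sum_le_sum
    intro i _
    by_cases hi : i ∈ S
    · rw [hyS i hi]
      simp
    · have : hA.eigenvalues i ≤ 2 := by
        simp only [hS, Finset.mem_filter, Finset.mem_univ, true_and, not_lt] at hi
        exact hi
      nlinarith [sq_nonneg (y i)]
  have h4 : ∑ i, 2 * (y i)^2 = 2 * (x ⬝ᵥ x) := by
    rw [h1]
    simp [dotProduct, Finset.mul_sum, pow_two]
  have := hw c hc0
  rw [h2] at this
  linarith

end Aux

section GraphAux

variable {V : Type*} [Fintype V] [DecidableEq V] (G : SimpleGraph V)

private lemma sLap_isHermitian : (sLap G).IsHermitian := by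
  classical
  ext i j
  simp only [sLap, Matrix.conjTranspose_apply, Matrix.add_apply, Matrix.diagonal_apply,
    SimpleGraph.adjMatrix_apply, star_trivial]
  by_cases h : i = j
  · subst h; simp
  · simp [h, Ne.symm h, SimpleGraph.adj_comm]

open Classical in
private lemma sLap_eq_inc_mul_transpose :
    sLap G = G.incMatrix ℝ * (G.incMatrix ℝ)ᵀ := by
  classical
  rw [SimpleGraph.incMatrix_mul_transpose]
  ext a b
  by_cases h : a = b
  · subst h
    simp [sLap, SimpleGraph.adjMatrix_apply]
  · simp [sLap, SimpleGraph.adjMatrix_apply, Matrix.diagonal_apply_ne _ h, h]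

open Classical in
private lemma sLap_form (x : V → ℝ) :
    x ⬝ᵥ (sLap G *ᵥ x) = ∑ e : Sym2 V, ((G.incMatrix ℝ)ᵀ *ᵥ x) e ^ 2 := by
  rw [sLap_eq_inc_mul_transpose, ← Matrix.mulVec_mulVec, Matrix.dotProduct_mulVec,
    ← Matrix.mulVec_transpose]
  simp [dotProduct, pow_two]

open Classical in
private lemma incT_mulVec_edge (x : V → ℝ) {a b : V} (hab : G.Adj a b) :
    ((G.incMatrix ℝ)ᵀ *ᵥ x) s(a, b) = x a + x b := by
  classical
  have hne : a ≠ b := hab.ne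
  have hmem : s(a, b) ∈ G.edgeSet := hab
  have key : ∀ w : V, (G.incMatrix ℝ) w s(a, b)
      = (if w = a then (1:ℝ) else 0) + (if w = b then (1:ℝ) else 0) := by
    intro w
    by_cases hwa : w = a
    · subst hwa
      rw [SimpleGraph.incMatrix_of_mem_incidenceSet]
      · simp [hne]
      · exact ⟨hmem, by simp⟩
    · by_cases hwb : w = b
      · subst hwb
        rw [SimpleGraph.incMatrix_of_mem_incidenceSet]
        · simp [hwa]
        · exact ⟨hmem, by simp⟩
      · rw [SimpleGraph.incMatrix_of_notMem_incidenceSet]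
        · simp [hwa, hwb]
        · rintro ⟨-, hw⟩
          rcases Sym2.mem_iff.mp hw with h | h <;> [exact hwa h; exact hwb h]
  simp only [Matrix.mulVec, dotProduct, Matrix.transpose_apply, key, add_mul,
    ite_mul, one_mul, zero_mul, Finset.sum_add_distrib]
  rw [Finset.sum_ite_eq' Finset.univ a x, Finset.sum_ite_eq' Finset.univ b x]
  simp

private lemma sLap_eigenvalue_le (μ : ℝ)
    (hμ : Module.End.HasEigenvalue (Matrix.toLin' (sLap G)) μ) :
    μ ≤ 2 * (Fintype.card V : ℝ) - 2 := by
  classical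
  obtain ⟨k, hk⟩ := eigenvalue_mem_ball hμ
  have hdiag : sLap G k k = (G.degree k : ℝ) := by
    simp [sLap, SimpleGraph.adjMatrix_apply]
  have hrow : ∑ j ∈ Finset.univ.erase k, ‖sLap G k j‖ = (G.degree k : ℝ) := by
    have h1 : ∀ j ∈ Finset.univ.erase k, ‖sLap G k j‖ = (G.adjMatrix ℝ) k j := by
      intro j hj
      have hjk : j ≠ k := (Finset.mem_erase.mp hj).1
      have : sLap G k j = (G.adjMatrix ℝ) k j := by
        simp [sLap, Matrix.diagonal_apply_ne _ (Ne.symm hjk)]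
      rw [this, Real.norm_of_nonneg]
      by_cases h : G.Adj k j <;> simp [SimpleGraph.adjMatrix_apply, h]
    rw [Finset.sum_congr rfl h1, Finset.sum_erase]
    · have h2 := SimpleGraph.adjMatrix_mulVec_const_apply (G := G) (α := ℝ) (a := 1) (v := k)
      simp only [Matrix.mulVec, dotProduct, mul_one] at h2
      simpa using h2
    · simp [SimpleGraph.adjMatrix_apply]
  rw [Metric.mem_closedBall, hdiag, hrow, Real.dist_eq] at hk
  have habs : μ - (G.degree k : ℝ) ≤ (G.degree k : ℝ) := (abs_le.mp hk).2
  have hdeg : (G.degree k : ℝ) ≤ (Fintype.card V : ℝ) - 1 := by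
    have h1 : (G.degree k : ℕ) + 1 ≤ Fintype.card V := G.degree_lt_card_verts k
    have h2 := (Nat.cast_le (α := ℝ)).mpr h1
    push_cast at h2
    linarith
  linarith

private lemma dist_getVert_of_shortest (hconn : G.Connected) {u v : V} (w : G.Walk u v)
    (hlen : w.length = G.dist u v) {i : ℕ} (hi : i ≤ w.length) :
    G.dist u (w.getVert i) = i := by
  have hdadj : ∀ j < w.length, G.dist (w.getVert j) (w.getVert (j + 1)) = 1 := fun j hj =>
    SimpleGraph.dist_eq_one_iff_adj.mpr (w.adj_getVert_succ hj)
  have up1 : ∀ i, i ≤ w.length → G.dist u (w.getVert i) ≤ i := by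
    intro i
    induction i with
    | zero => intro _; simp [SimpleGraph.Walk.getVert_zero]
    | succ i ih =>
      intro hi
      have h1 : i < w.length := hi
      calc G.dist u (w.getVert (i + 1))
          ≤ G.dist u (w.getVert i) + G.dist (w.getVert i) (w.getVert (i + 1)) :=
            hconn.dist_triangle
        _ ≤ i + 1 := by
            rw [hdadj i h1]
            exact Nat.add_le_add_right (ih (le_of_lt h1)) 1
  have up2 : ∀ k i, i + k = w.length → G.dist (w.getVert i) v ≤ k := by
    intro k
    induction k with
    | zero =>
      intro i hi
      simp only [Nat.add_zero] at hi
      subst hi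
      simp [SimpleGraph.Walk.getVert_length]
    | succ k ih =>
      intro i hi
      have h1 : i < w.length := by omega
      calc G.dist (w.getVert i) v
          ≤ G.dist (w.getVert i) (w.getVert (i + 1)) + G.dist (w.getVert (i + 1)) v :=
            hconn.dist_triangle
        _ ≤ 1 + k := by
            rw [hdadj i h1]
            exact Nat.add_le_add_left (ih (i + 1) (by omega)) 1
        _ = k + 1 := by omega
  have h1 := up1 i hi
  have h2 := up2 (w.length - i) i (by omega)
  have h3 : w.length ≤ G.dist u (w.getVert i) + G.dist (w.getVert i) v := by
    rw [hlen]
    exact hconn.dist_triangle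
  omega

private lemma sum_range_two_mul {M : Type*} [AddCommMonoid M] (m : ℕ) (t : ℕ → M) :
    ∑ j ∈ Finset.range (2 * m), t j = ∑ i ∈ Finset.range m, (t (2 * i) + t (2 * i + 1)) := by
  induction m with
  | zero => simp
  | succ m ih =>
    have h : 2 * (m + 1) = (2 * m + 1) + 1 := by ring
    rw [h, Finset.sum_range_succ, Finset.sum_range_succ, ih, Finset.sum_range_succ]
    abel

end GraphAux

/-- Let `G` be a connected finite simple graph on `n` vertices with diameter `d`. Then
`G` has at least `⌊d/2⌋` signless Laplacian eigenvalues in `(2, 2n-2]`. -/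
theorem diam_count_Ioc {V : Type*} [Fintype V] [DecidableEq V]
    (G : SimpleGraph V) (d : ℕ) (hconn : G.Connected) (hd : G.diam = d) :
    d / 2 ≤ qCount G (Set.Ioc 2 (2 * (Fintype.card V : ℝ) - 2)) := by
  classical
  have hNV : Nonempty V := hconn.nonempty
  have hA : (sLap G).IsHermitian := sLap_isHermitian G
  have hbound : ∀ i, hA.eigenvalues i ≤ 2 * (Fintype.card V : ℝ) - 2 := by
    intro i
    apply sLap_eigenvalue_le G
    refine Module.End.hasEigenvalue_of_hasEigenvector (x := ⇑(hA.eigenvectorBasis i)) ⟨?_, ?_⟩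
    · rw [Module.End.mem_eigenspace_iff, Matrix.toLin'_apply]
      exact hA.mulVec_eigenvectorBasis i
    · intro h
      refine hA.eigenvectorBasis.orthonormal.ne_zero i ?_
      ext z
      exact congrFun h z
  have hqc : qCount G (Set.Ioc 2 (2 * (Fintype.card V : ℝ) - 2))
      = (Finset.univ.filter fun i => 2 < hA.eigenvalues i).card := by
    unfold qCount
    rw [qSpec, roots_charpoly_hermitian _ hA, Multiset.countP_map]
    have hiff : (fun a : V => hA.eigenvalues a ∈ Set.Ioc 2 (2 * (Fintype.card V : ℝ) - 2))
        = (fun i : V => 2 < hA.eigenvalues i) := by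
      funext i
      simp only [Set.mem_Ioc, eq_iff_iff]
      exact ⟨fun h => h.1, fun h => ⟨h, hbound i⟩⟩
    simp only [hiff]
    rw [Finset.card_def, Finset.filter_val]
  rw [hqc]
  -- set up a geodesic of length `d`
  obtain ⟨u, v, huv⟩ := G.exists_dist_eq_diam
  rw [hd] at huv
  obtain ⟨P, hP⟩ := (hconn u v).exists_walk_length_eq_dist
  have hlen : P.length = d := by rw [hP, huv]
  set f : ℕ → V := P.getVert with hf
  have hdist : ∀ i ≤ d, G.dist u (f i) = i := by
    intro i hi
    exact dist_getVert_of_shortest G hconn P hP (by omega)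
  have hfeq : ∀ j, j ≤ d → ∀ k, k ≤ d → (f j = f k ↔ j = k) := by
    intro j hj k hk
    constructor
    · intro h
      have h1 := hdist j hj
      have h2 := hdist k hk
      rw [h] at h1
      omega
    · rintro rfl; rfl
  have hfne : ∀ j, j ≤ d → ∀ k, k ≤ d → j ≠ k → f j ≠ f k := by
    intro j hj k hk hjk h
    exact hjk ((hfeq j hj k hk).mp h)
  have hadj : ∀ j < d, G.Adj (f j) (f (j + 1)) := by
    intro j hj
    exact P.adj_getVert_succ (by omega)
  set m := d / 2 with hm
  have hm2 : 2 * m ≤ d := by omega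
  set g : Fin m → (V → ℝ) := fun i z =>
    (if z = f (2 * i.val + 1) then 1 else 0) + (if z = f (2 * i.val + 2) then 1 else 0) with hg
  refine count_big_eigenvalues (sLap G) hA g ?_
  intro c hc
  set x : V → ℝ := ∑ i, c i • g i with hx
  set cc : ℕ → ℝ := fun k => if h : k < m then c ⟨k, h⟩ else 0 with hcc
  have hxz : ∀ z : V, x z = ∑ i : Fin m, c i *
      ((if z = f (2 * i.val + 1) then 1 else 0) + (if z = f (2 * i.val + 2) then 1 else 0)) := by
    intro z
    rw [hx]
    simp [hg, Finset.sum_apply]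
  -- evaluation of x at the path vertices
  have hX0 : x (f 0) = 0 := by
    rw [hxz]
    apply Finset.sum_eq_zero
    intro i _
    have hiv := i.isLt
    rw [if_neg (hfne 0 (by omega) (2 * i.val + 1) (by omega) (by omega)),
      if_neg (hfne 0 (by omega) (2 * i.val + 2) (by omega) (by omega))]
    ring
  have hX1 : ∀ i : Fin m, x (f (2 * i.val + 1)) = c i := by
    intro i
    have hiv := i.isLt
    rw [hxz]
    have key : ∀ i' : Fin m, c i' *
        ((if f (2 * i.val + 1) = f (2 * i'.val + 1) then (1:ℝ) else 0)
          + (if f (2 * i.val + 1) = f (2 * i'.val + 2) then 1 else 0))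
        = if i' = i then c i' else 0 := by
      intro i'
      have hiv' := i'.isLt
      rw [if_neg (hfne (2 * i.val + 1) (by omega) (2 * i'.val + 2) (by omega) (by omega))]
      by_cases h : i' = i
      · subst h
        rw [if_pos rfl, if_pos rfl]
        ring
      · have hvne : i.val ≠ i'.val := fun hh => h (Fin.ext hh.symm)
        rw [if_neg (hfne (2 * i.val + 1) (by omega) (2 * i'.val + 1) (by omega) (by omega)),
          if_neg h]
        ring
    rw [Finset.sum_congr rfl (fun i' _ => key i')]
    simp
  have hX2 : ∀ i : Fin m, x (f (2 * i.val + 2)) = c i := by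
    intro i
    have hiv := i.isLt
    rw [hxz]
    have key : ∀ i' : Fin m, c i' *
        ((if f (2 * i.val + 2) = f (2 * i'.val + 1) then (1:ℝ) else 0)
          + (if f (2 * i.val + 2) = f (2 * i'.val + 2) then 1 else 0))
        = if i' = i then c i' else 0 := by
      intro i'
      have hiv' := i'.isLt
      rw [if_neg (hfne (2 * i.val + 2) (by omega) (2 * i'.val + 1) (by omega) (by omega))]
      by_cases h : i' = i
      · subst h
        rw [if_pos rfl, if_pos rfl]
        ring
      · have hvne : i.val ≠ i'.val := fun hh => h (Fin.ext hh.symm)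
        rw [if_neg (hfne (2 * i.val + 2) (by omega) (2 * i'.val + 2) (by omega) (by omega)),
          if_neg h]
        ring
    rw [Finset.sum_congr rfl (fun i' _ => key i')]
    simp
  -- ‖x‖² = 2 ∑ cᵢ²
  have hgdot : ∀ i j : Fin m, g i ⬝ᵥ g j = if i = j then 2 else 0 := by
    intro i j
    have hiv := i.isLt
    have hjv := j.isLt
    have expand : g i ⬝ᵥ g j
        = (if f (2 * j.val + 1) = f (2 * i.val + 1) then (1:ℝ) else 0)
          + (if f (2 * j.val + 1) = f (2 * i.val + 2) then 1 else 0)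
          + ((if f (2 * j.val + 2) = f (2 * i.val + 1) then 1 else 0)
          + (if f (2 * j.val + 2) = f (2 * i.val + 2) then 1 else 0)) := by
      simp only [hg, dotProduct, add_mul, mul_add, ite_mul, mul_ite, one_mul, mul_one,
        zero_mul, mul_zero, Finset.sum_add_distrib, Finset.sum_ite_eq' Finset.univ,
        Finset.mem_univ, if_true]
    rw [expand]
    rw [if_neg (hfne (2 * j.val + 1) (by omega) (2 * i.val + 2) (by omega) (by omega)),
      if_neg (hfne (2 * j.val + 2) (by omega) (2 * i.val + 1) (by omega) (by omega))]
    by_cases h : i = j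
    · subst h
      rw [if_pos rfl, if_pos rfl, if_pos rfl]
      ring
    · have hvne : i.val ≠ j.val := fun hh => h (Fin.ext hh)
      rw [if_neg (hfne (2 * j.val + 1) (by omega) (2 * i.val + 1) (by omega) (by omega)),
        if_neg (hfne (2 * j.val + 2) (by omega) (2 * i.val + 2) (by omega) (by omega)),
        if_neg h]
      ring
  have hsum_dot : ∀ y : V → ℝ, (∑ i, c i • g i) ⬝ᵥ y = ∑ i, c i * (g i ⬝ᵥ y) := by
    intro y
    simp only [dotProduct, Finset.sum_apply, Pi.smul_apply, smul_eq_mul,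
      Finset.sum_mul, Finset.mul_sum]
    rw [Finset.sum_comm]
    simp [mul_assoc]
  have hdot_sum : ∀ y : V → ℝ, y ⬝ᵥ (∑ j, c j • g j) = ∑ j, c j * (y ⬝ᵥ g j) := by
    intro y
    simp only [dotProduct, Finset.sum_apply, Pi.smul_apply, smul_eq_mul,
      Finset.mul_sum]
    rw [Finset.sum_comm]
    apply Finset.sum_congr rfl
    intro j _
    apply Finset.sum_congr rfl
    intro z _
    ring
  have hxx : x ⬝ᵥ x = ∑ i : Fin m, 2 * (c i)^2 := by
    rw [hx, hsum_dot]
    have inner : ∀ i : Fin m, c i * (g i ⬝ᵥ (∑ j, c j • g j)) = 2 * (c i)^2 := by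
      intro i
      rw [hdot_sum]
      have term : ∀ j : Fin m, c j * (g i ⬝ᵥ g j) = if i = j then c j * 2 else 0 := by
        intro j
        rw [hgdot i j]
        by_cases h : i = j
        · subst h; simp
        · simp [h]
      rw [Finset.sum_congr rfl (fun j _ => term j), Finset.sum_ite_eq Finset.univ i
        (fun j => c j * 2)]
      simp
      ring
    rw [Finset.sum_congr rfl (fun i _ => inner i)]
  -- lower bound the quadratic form by the sum over the path edges
  set T : Finset (Sym2 V) := (Finset.range (2 * m)).image (fun j => s(f j, f (j + 1))) with hT
  have hTsum : ∑ e ∈ T, ((G.incMatrix ℝ)ᵀ *ᵥ x) e ^ 2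
      = ∑ j ∈ Finset.range (2 * m), (x (f j) + x (f (j + 1)))^2 := by
    rw [Finset.sum_image]
    · apply Finset.sum_congr rfl
      intro j hj
      rw [Finset.mem_range] at hj
      rw [incT_mulVec_edge G x (hadj j (by omega))]
    · intro j hj k hk hjk
      rw [Finset.mem_coe, Finset.mem_range] at hj hk
      rcases Sym2.eq_iff.mp hjk with ⟨h1, h2⟩ | ⟨h1, h2⟩
      · exact (hfeq j (by omega) k (by omega)).mp h1
      · have e1 := (hfeq j (by omega) (k + 1) (by omega)).mp h1
        have e2 := (hfeq (j + 1) (by omega) k (by omega)).mp h2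
        omega
  have hlow : ∑ j ∈ Finset.range (2 * m), (x (f j) + x (f (j + 1)))^2
      ≤ x ⬝ᵥ (sLap G *ᵥ x) := by
    rw [sLap_form G x, ← hTsum]
    exact Finset.sum_le_sum_of_subset_of_nonneg (Finset.subset_univ T)
      (fun e _ _ => sq_nonneg _)
  have hpair : ∑ j ∈ Finset.range (2 * m), (x (f j) + x (f (j + 1)))^2
      = ∑ i ∈ Finset.range m, ((x (f (2 * i)) + x (f (2 * i + 1)))^2
        + (x (f (2 * i + 1)) + x (f (2 * i + 1 + 1)))^2) :=
    sum_range_two_mul m _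
  -- rewrite in terms of the coefficients
  have hXodd : ∀ i, i < m → x (f (2 * i + 1)) = cc i := by
    intro i hi
    have := hX1 ⟨i, hi⟩
    simp only at this
    rw [this]
    simp [hcc, hi]
  have hXeven2 : ∀ i, i < m → x (f (2 * i + 2)) = cc i := by
    intro i hi
    have := hX2 ⟨i, hi⟩
    simp only at this
    rw [this]
    simp [hcc, hi]
  have hXeven : ∀ i, i < m → x (f (2 * i)) = if i = 0 then 0 else cc (i - 1) := by
    intro i hi
    by_cases h : i = 0
    · subst h
      simpa using hX0
    · rw [if_neg h]
      have h2 : 2 * i = 2 * (i - 1) + 2 := by omega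
      rw [h2, hXeven2 (i - 1) (by omega)]
  have heval : ∑ i ∈ Finset.range m, ((x (f (2 * i)) + x (f (2 * i + 1)))^2
        + (x (f (2 * i + 1)) + x (f (2 * i + 1 + 1)))^2)
      = ∑ i ∈ Finset.range m,
        (((if i = 0 then 0 else cc (i - 1)) + cc i)^2 + 4 * (cc i)^2) := by
    apply Finset.sum_congr rfl
    intro i hi
    rw [Finset.mem_range] at hi
    have h211 : 2 * i + 1 + 1 = 2 * i + 2 := rfl
    rw [h211, hXodd i hi, hXeven2 i hi, hXeven i hi]
    ring
  -- positivity of the cross terms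
  have hex : ∃ k, cc k ≠ 0 := by
    obtain ⟨i0, hi0⟩ := Function.ne_iff.mp hc
    refine ⟨i0.val, ?_⟩
    have : cc i0.val = c i0 := by simp [hcc, i0.isLt]
    rw [this]
    simpa using hi0
  have hkne : cc (Nat.find hex) ≠ 0 := Nat.find_spec hex
  have hkmin : ∀ j < Nat.find hex, cc j = 0 := fun j hj => not_not.mp (Nat.find_min hex hj)
  have hkm : Nat.find hex < m := by
    by_contra h
    apply hkne
    simp only [hcc]
    exact dif_neg h
  have hterm : ((if Nat.find hex = 0 then 0 else cc (Nat.find hex - 1)) + cc (Nat.find hex))^2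
      = (cc (Nat.find hex))^2 := by
    by_cases h : Nat.find hex = 0
    · simp [h]
    · rw [if_neg h, hkmin (Nat.find hex - 1) (by omega), zero_add]
  have hpos : 0 < ∑ i ∈ Finset.range m, ((if i = 0 then 0 else cc (i - 1)) + cc i)^2 := by
    have hle : ((if Nat.find hex = 0 then 0 else cc (Nat.find hex - 1)) + cc (Nat.find hex))^2
        ≤ ∑ i ∈ Finset.range m, ((if i = 0 then 0 else cc (i - 1)) + cc i)^2 :=
      Finset.single_le_sum (f := fun i => ((if i = 0 then 0 else cc (i - 1)) + cc i)^2)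
        (fun i _ => sq_nonneg _) (Finset.mem_range.mpr hkm)
    rw [hterm] at hle
    have hsq : 0 < (cc (Nat.find hex))^2 := by positivity
    linarith
  -- sum conversions
  have hconv : ∑ i : Fin m, 2 * (c i)^2 = ∑ i ∈ Finset.range m, 2 * (cc i)^2 := by
    rw [← Fin.sum_univ_eq_sum_range (fun i => 2 * (cc i)^2) m]
    apply Finset.sum_congr rfl
    intro i _
    have : cc i.val = c i := by simp [hcc, i.isLt]
    rw [this]
  -- put everything together
  have hsplit : ∑ i ∈ Finset.range m,
        (((if i = 0 then 0 else cc (i - 1)) + cc i)^2 + 4 * (cc i)^2)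
      = (∑ i ∈ Finset.range m, ((if i = 0 then 0 else cc (i - 1)) + cc i)^2)
        + 4 * ∑ i ∈ Finset.range m, (cc i)^2 := by
    rw [Finset.sum_add_distrib, Finset.mul_sum]
  have hxx' : 2 * (x ⬝ᵥ x) = 4 * ∑ i ∈ Finset.range m, (cc i)^2 := by
    rw [hxx, hconv, Finset.mul_sum, Finset.mul_sum]
    apply Finset.sum_congr rfl
    intro i _
    ring
  calc 2 * (x ⬝ᵥ x) = 4 * ∑ i ∈ Finset.range m, (cc i)^2 := hxx'
    _ < (∑ i ∈ Finset.range m, ((if i = 0 then 0 else cc (i - 1)) + cc i)^2)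
        + 4 * ∑ i ∈ Finset.range m, (cc i)^2 := by linarith
    _ = ∑ i ∈ Finset.range m,
        (((if i = 0 then 0 else cc (i - 1)) + cc i)^2 + 4 * (cc i)^2) := hsplit.symm
    _ = ∑ i ∈ Finset.range m, ((x (f (2 * i)) + x (f (2 * i + 1)))^2
        + (x (f (2 * i + 1)) + x (f (2 * i + 1 + 1)))^2) := heval.symm
    _ = ∑ j ∈ Finset.range (2 * m), (x (f j) + x (f (j + 1)))^2 := hpair.symm
    _ ≤ x ⬝ᵥ (sLap G *ᵥ x) := hlow
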